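/- arXiv:2406.03252 — 2 statements merged into one kernel-verified Lean document; each statement's English description precedes it below -/
import Mathlib

section
/- Suppose integrable random variables (C_j) adapted to a filtration satisfy E[C_{j+1} | F_j] = F_j C_j and Var(C_{j+1} | F_j) = Σ_j² C_j with deterministic constants F_j > 0 and Σ_j² ≥ 0. Then for all s ≤ j: Var(C_j | F_s) = ( Σ_{k=s}^{j-1} (∏_{ℓ=k+1}^{j-1} F_ℓ²) Σ_k² (∏_{ℓ=s}^{k-1} F_ℓ) ) · C_s. -/
/-!
Both conditional moments of `C_j` given `𝓕_s` are computed by induction on `j ≥ s`, using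
the tower property `E[· | 𝓕_s] = E[E[· | 𝓕_j] | 𝓕_s]`: the one-step mean assumption gives
`E[C_j | 𝓕_s] = (∏_{ℓ=s}^{j-1} F_ℓ) C_s`, and the one-step second moment assumption gives
`E[C_{j+1}² | 𝓕_s] = F_j² E[C_j² | 𝓕_s] + Σ_j² E[C_j | 𝓕_s]`, so `E[C_j² | 𝓕_s]` is
`(∏ F_ℓ²) C_s²` plus a multiple of `C_s` whose coefficient obeys
`c_{j+1} = F_j² c_j + Σ_j² ∏_{ℓ=s}^{j-1} F_ℓ`. Subtracting the square of the mean cancels the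
`C_s²` terms.
-/

open MeasureTheory Filter Finset

namespace MackModel

section Coefficient

variable {R : Type*} [CommSemiring R]

def varianceCoeff (F S2 : ℕ → R) (s j : ℕ) : R :=
  ∑ k ∈ Ico s j, (∏ l ∈ Ico (k + 1) j, F l ^ 2) * S2 k * ∏ l ∈ Ico s k, F l

@[simp]
lemma varianceCoeff_self (F S2 : ℕ → R) (s : ℕ) : varianceCoeff F S2 s s = 0 := by
  simp [varianceCoeff]

lemma varianceCoeff_succ (F S2 : ℕ → R) {s j : ℕ} (hsj : s ≤ j) :
    varianceCoeff F S2 s (j + 1) =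
      F j ^ 2 * varianceCoeff F S2 s j + S2 j * ∏ l ∈ Ico s j, F l := by
  have hprod : ∀ k ∈ Ico s j, ∏ l ∈ Ico (k + 1) (j + 1), F l ^ 2 =
      F j ^ 2 * ∏ l ∈ Ico (k + 1) j, F l ^ 2 := fun k hk => by
    rw [prod_Ico_succ_top (mem_Ico.mp hk).2, mul_comm]
  rw [varianceCoeff, sum_Ico_succ_top hsj, sum_congr rfl fun k hk => by rw [hprod k hk],
    varianceCoeff, mul_sum]
  simp only [Ico_self, prod_empty, one_mul, mul_assoc]

end Coefficient

variable {Ω : Type*} {m0 : MeasurableSpace Ω} {μ : Measure Ω}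

lemma condExp_const_mul (m : MeasurableSpace Ω) (a : ℝ) (f : Ω → ℝ) :
    μ[fun ω => a * f ω | m] =ᵐ[μ] fun ω => a * μ[f | m] ω :=
  condExp_smul a f m

lemma condExp_const_mul_add_const_mul {m : MeasurableSpace Ω} {f g : Ω → ℝ}
    (hf : Integrable f μ) (hg : Integrable g μ) (a b : ℝ) :
    μ[fun ω => a * f ω + b * g ω | m] =ᵐ[μ] fun ω => a * μ[f | m] ω + b * μ[g | m] ω :=
  (condExp_add (hf.const_mul a) (hg.const_mul b) m).trans
    ((condExp_const_mul m a f).add (condExp_const_mul m b g))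

lemma condExp_ae_eq_condExp_of_condExp_ae_eq_of_le {ι : Type*} [Preorder ι]
    {ℱ : Filtration ι m0} [SigmaFiniteFiltration μ ℱ] {E : Type*} [NormedAddCommGroup E]
    [NormedSpace ℝ E] [CompleteSpace E] {X G : Ω → E} {i j : ι} (hij : i ≤ j)
    (h : μ[X | ℱ j] =ᵐ[μ] G) : μ[X | ℱ i] =ᵐ[μ] μ[G | ℱ i] :=
  (condExp_condExp_of_le (ℱ.mono hij) (ℱ.le j)).symm.trans (condExp_congr_ae h)

variable {ℱ : Filtration ℕ m0} {C : ℕ → Ω → ℝ} {F S2 : ℕ → ℝ}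

lemma condExp_eq_prod_mul [SigmaFiniteFiltration μ ℱ] (hadapted : Adapted ℱ C) (hint : ∀ j, Integrable (C j) μ)
    (hmean : ∀ j, μ[C (j + 1) | ℱ j] =ᵐ[μ] fun ω => F j * C j ω) {s j : ℕ} (hsj : s ≤ j) :
    μ[C j | ℱ s] =ᵐ[μ] fun ω => (∏ l ∈ Ico s j, F l) * C s ω := by
  induction j, hsj using Nat.le_induction with
  | base =>
    rw [condExp_of_stronglyMeasurable (ℱ.le s) (hadapted s).stronglyMeasurable (hint s)]
    simp
  | succ j hsj ih =>
    filter_upwards [condExp_ae_eq_condExp_of_condExp_ae_eq_of_le hsj (hmean j),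
      condExp_const_mul (ℱ s) (F j) (C j), ih] with ω hstep hmul hj
    rw [hstep, hmul, hj, prod_Ico_succ_top hsj]
    ring

lemma condExp_sq_eq [IsFiniteMeasure μ] (hadapted : Adapted ℱ C) (hint : ∀ j, MemLp (C j) 2 μ)
    (hmean : ∀ j, μ[C (j + 1) | ℱ j] =ᵐ[μ] fun ω => F j * C j ω)
    (hsecond : ∀ j, μ[fun ω => C (j + 1) ω ^ 2 | ℱ j] =ᵐ[μ]
      fun ω => (F j * C j ω) ^ 2 + S2 j * C j ω) {s j : ℕ} (hsj : s ≤ j) :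
    μ[fun ω => C j ω ^ 2 | ℱ s] =ᵐ[μ]
      fun ω => (∏ l ∈ Ico s j, F l ^ 2) * C s ω ^ 2 + varianceCoeff F S2 s j * C s ω := by
  have hint₁ : ∀ j, Integrable (C j) μ := fun j => (hint j).integrable one_le_two
  induction j, hsj using Nat.le_induction with
  | base =>
    rw [condExp_of_stronglyMeasurable (ℱ.le s)
      ((hadapted s).pow_const 2).stronglyMeasurable (hint s).integrable_sq]
    simp
  | succ j hsj ih =>
    have hstep : μ[fun ω => C (j + 1) ω ^ 2 | ℱ s] =ᵐ[μ]
        μ[fun ω => F j ^ 2 * C j ω ^ 2 + S2 j * C j ω | ℱ s] :=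
      condExp_ae_eq_condExp_of_condExp_ae_eq_of_le hsj (by simpa only [mul_pow] using hsecond j)
    filter_upwards [hstep, condExp_const_mul_add_const_mul (m := ℱ s) (hint j).integrable_sq
      (hint₁ j) (F j ^ 2) (S2 j), ih, condExp_eq_prod_mul hadapted hint₁ hmean hsj]
      with ω hstep hlin hsq hmean
    rw [hstep, hlin, hsq, hmean, varianceCoeff_succ F S2 hsj, prod_Ico_succ_top hsj]
    ring

end MackModel

open MackModel in
theorem mack_conditional_variance_general
    {Ω : Type*} {m0 : MeasurableSpace Ω} (μ : Measure Ω) [IsProbabilityMeasure μ]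
    (ℱ : Filtration ℕ m0)
    (C : ℕ → Ω → ℝ) (F : ℕ → ℝ) (S2 : ℕ → ℝ)
    (hadapted : Adapted ℱ C)
    (hint : ∀ j, MemLp (C j) 2 μ)
    (hH2 : ∀ j, μ[C (j + 1) | ℱ j] =ᵐ[μ] fun ω => F j * C j ω)
    (hH3 : ∀ j, μ[fun ω => (C (j + 1) ω) ^ 2 | ℱ j] =ᵐ[μ]
      fun ω => (F j * C j ω) ^ 2 + S2 j * C j ω) :
    ∀ s j, s ≤ j →
      (fun ω => (μ[fun ω' => (C j ω') ^ 2 | ℱ s]) ω - ((μ[C j | ℱ s]) ω) ^ 2) =ᵐ[μ]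
        fun ω => (∑ k ∈ Finset.Ico s j,
          (∏ l ∈ Finset.Ico (k + 1) j, (F l) ^ 2) * S2 k * (∏ l ∈ Finset.Ico s k, F l)) *
          C s ω := by
  intro s j hsj
  filter_upwards [condExp_sq_eq hadapted hint hH2 hH3 hsj,
    condExp_eq_prod_mul hadapted (fun j => (hint j).integrable one_le_two) hH2 hsj]
    with ω hsecond hmean
  rw [hsecond, hmean, prod_pow, varianceCoeff]
  ring

/-- multi-step conditional variance in Mack's model.  If
`E[C_{j+1} | 𝓕_j] = F_j C_j` and `Var(C_{j+1} | 𝓕_j) = Σ_j² C_j`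
(i.e. `E[C_{j+1}² | 𝓕_j] = (F_j C_j)² + Σ_j² C_j`), then for all `s ≤ j`:
`Var(C_j | 𝓕_s) = (∑_{k=s}^{j-1} (∏_{ℓ=k+1}^{j-1} F_ℓ²) Σ_k² (∏_{ℓ=s}^{k-1} F_ℓ)) C_s`. -/
theorem mack_conditional_variance
    {Ω : Type*} {m0 : MeasurableSpace Ω} (μ : Measure Ω) [IsProbabilityMeasure μ]
    (ℱ : Filtration ℕ m0)
    (C : ℕ → Ω → ℝ) (F : ℕ → ℝ) (S2 : ℕ → ℝ)
    (hF : ∀ j, 0 < F j) (hS2 : ∀ j, 0 ≤ S2 j)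
    (hadapted : Adapted ℱ C)
    (hint : ∀ j, MemLp (C j) 2 μ)
    (hH2 : ∀ j, μ[C (j + 1) | ℱ j] =ᵐ[μ] fun ω => F j * C j ω)
    (hH3 : ∀ j, μ[fun ω => (C (j + 1) ω) ^ 2 | ℱ j] =ᵐ[μ]
      fun ω => (F j * C j ω) ^ 2 + S2 j * C j ω) :
    ∀ s j, s ≤ j →
      (fun ω => (μ[fun ω' => (C j ω') ^ 2 | ℱ s]) ω - ((μ[C j | ℱ s]) ω) ^ 2) =ᵐ[μ]
        fun ω => (∑ k ∈ Finset.Ico s j,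
          (∏ l ∈ Finset.Ico (k + 1) j, (F l) ^ 2) * S2 k * (∏ l ∈ Finset.Ico s k, F l)) *
          C s ω :=
  mack_conditional_variance_general μ ℱ C F S2 hadapted hint hH2 hH3
end

section
/- Let f, σ : [s, T] → ℝ be bounded measurable with σ ≥ 0, and let v : [s, T] → ℝ be continuous satisfying v(t) = 2∫_s^t f(u) v(u) du + c ∫_s^t σ(u)² exp(∫_s^u f(z) dz) du for a constant c ≥ 0. Then v(t) = c ∫_s^t σ(u)² exp(∫_s^u f(z) dz + 2∫_u^t f(z) dz) du. -/
/-! With `F t = ∫_s^t f`, the equation says that `v` is absolutely continuous on `[s, t]`, vanishes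
at `s`, and satisfies `v' = 2 f v + c σ² e^F` almost everywhere. The integrating factor `e^{-2F}`
turns this into `(e^{-2F} v)' = c σ² e^{-F}` a.e., and the fundamental theorem of calculus for
absolutely continuous functions gives `v t = c e^{2F t} ∫_s^t σ² e^{-F}`. -/

open MeasureTheory Set Filter Real
open scoped NNReal

theorem intervalIntegrable_of_abs_le {g : ℝ → ℝ} (hg : AEStronglyMeasurable g volume) {M : ℝ}
    (hM : ∀ u, |g u| ≤ M) (a b : ℝ) : IntervalIntegrable g volume a b :=
  (intervalIntegrable_const (c := M)).mono_fun hg.restrict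
    (ae_of_all _ fun u ↦ by simpa using (hM u).trans (le_abs_self M))

theorem LipschitzOnWith.comp_absolutelyContinuousOnInterval {X Y : Type*} [PseudoMetricSpace X]
    [PseudoMetricSpace Y] {g : X → Y} {K : ℝ≥0} {t : Set X} {f : ℝ → X} {a b : ℝ}
    (hg : LipschitzOnWith K g t) (hf : AbsolutelyContinuousOnInterval f a b)
    (hft : MapsTo f (uIcc a b) t) :
    AbsolutelyContinuousOnInterval (g ∘ f) a b := by
  unfold AbsolutelyContinuousOnInterval at hf ⊢
  refine squeeze_zero' ?_ ?_ (by simpa using hf.const_mul (K : ℝ))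
  · exact Eventually.of_forall fun _ ↦ Finset.sum_nonneg fun _ _ ↦ dist_nonneg
  rw [eventually_inf_principal]
  filter_upwards with ⟨n, I⟩ hnI
  rw [Finset.mul_sum]
  gcongr with i hi
  simp only [AbsolutelyContinuousOnInterval.disjWithin, mem_ofPred_eq] at hnI
  exact hg.dist_le_mul _ (hft (hnI.1 i hi).1) _ (hft (hnI.1 i hi).2)

theorem LocallyLipschitz.comp_absolutelyContinuousOnInterval {E F : Type*}
    [SeminormedAddCommGroup E] [PseudoMetricSpace F] {g : E → F} {f : ℝ → E} {a b : ℝ}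
    (hg : LocallyLipschitz g) (hf : AbsolutelyContinuousOnInterval f a b) :
    AbsolutelyContinuousOnInterval (g ∘ f) a b := by
  obtain ⟨K, hK⟩ := LocallyLipschitzOn.exists_lipschitzOnWith_of_compact
    (isCompact_uIcc.image_of_continuousOn hf.continuousOn) hg.locallyLipschitzOn
  exact hK.comp_absolutelyContinuousOnInterval hf (mapsTo_image f _)

theorem AbsolutelyContinuousOnInterval.integral_eq_sub_of_ae_hasDerivAt {f f' : ℝ → ℝ} {a b : ℝ}
    (hf : AbsolutelyContinuousOnInterval f a b)
    (hf' : ∀ᵐ x, x ∈ uIcc a b → HasDerivAt f (f' x) x) :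
    ∫ x in a..b, f' x = f b - f a := by
  rw [← hf.integral_deriv_eq_sub]
  refine intervalIntegral.integral_congr_ae ?_
  filter_upwards [hf'] with x hx hxab
  exact (hx (uIoc_subset_uIcc hxab)).deriv.symm

theorem eq_exp_integral_mul_integral_of_eq_integral {a b v : ℝ → ℝ} {s t : ℝ}
    (ha : IntervalIntegrable a volume s t) (hb : IntervalIntegrable b volume s t)
    (hv : ContinuousOn v (uIcc s t))
    (heq : ∀ x ∈ uIcc s t, v x = (∫ u in s..x, a u * v u) + ∫ u in s..x, b u) :
    v t = exp (∫ u in s..t, a u) * ∫ u in s..t, b u * exp (-∫ z in s..u, a z) := by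
  have hav : IntervalIntegrable (fun u ↦ a u * v u) volume s t := ha.mul_continuousOn hv
  have hs : s ∈ uIcc s t := left_mem_uIcc
  set A : ℝ → ℝ := fun x ↦ ∫ u in s..x, a u
  set W : ℝ → ℝ := fun x ↦ (∫ u in s..x, a u * v u) + ∫ u in s..x, b u
  have hW_ac : AbsolutelyContinuousOnInterval W s t :=
    (hav.absolutelyContinuousOnInterval_intervalIntegral hs).add
      (hb.absolutelyContinuousOnInterval_intervalIntegral hs)
  have hexpA_ac : AbsolutelyContinuousOnInterval (fun x ↦ exp (-A x)) s t :=
    (contDiff_exp.comp contDiff_neg).locallyLipschitz.comp_absolutelyContinuousOnInterval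
      (ha.absolutelyContinuousOnInterval_intervalIntegral hs)
  have hderiv : ∀ᵐ x, x ∈ uIcc s t →
      HasDerivAt (fun x ↦ exp (-A x) * W x) (b x * exp (-A x)) x := by
    filter_upwards [ha.ae_hasDerivAt_integral, hav.ae_hasDerivAt_integral,
      hb.ae_hasDerivAt_integral] with x hA hAv hB hx
    refine ((hA hx s hs).neg.exp.mul ((hAv hx s hs).add (hB hx s hs))).congr_deriv ?_
    simp only [Pi.add_apply, Pi.neg_apply]
    rw [← heq x hx]
    ring
  have hftc := (hexpA_ac.fun_mul hW_ac).integral_eq_sub_of_ae_hasDerivAt hderiv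
  simp only [A, W, intervalIntegral.integral_same, neg_zero, exp_zero, add_zero, mul_zero,
    sub_zero, ← heq t right_mem_uIcc] at hftc
  rw [hftc, ← mul_assoc, ← exp_add, add_neg_cancel, exp_zero, one_mul]

theorem variance_integral_equation_solution_general
    (s T c : ℝ) (f σ v : ℝ → ℝ)
    (hf_meas : Measurable f) (hf_bdd : ∃ M, ∀ u, |f u| ≤ M)
    (hσ_meas : Measurable σ) (hσ_bdd : ∃ M, ∀ u, |σ u| ≤ M)
    (hv_cont : ContinuousOn v (Set.Icc s T))
    (heq : ∀ t ∈ Set.Icc s T,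
      v t = 2 * (∫ u in s..t, f u * v u) +
        c * ∫ u in s..t, (σ u) ^ 2 * Real.exp (∫ z in s..u, f z)) :
    ∀ t ∈ Set.Icc s T,
      v t = c * ∫ u in s..t,
        (σ u) ^ 2 * Real.exp ((∫ z in s..u, f z) + 2 * ∫ z in u..t, f z) := by
  obtain ⟨M, hM⟩ := hf_bdd
  obtain ⟨N, hN⟩ := hσ_bdd
  have hf : ∀ a b, IntervalIntegrable f volume a b :=
    intervalIntegrable_of_abs_le hf_meas.aestronglyMeasurable hM
  have hσ2 : ∀ a b, IntervalIntegrable (fun u ↦ σ u ^ 2) volume a b :=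
    intervalIntegrable_of_abs_le (hσ_meas.pow_const 2).aestronglyMeasurable
      fun u ↦ by rw [abs_pow]; exact pow_le_pow_left₀ (abs_nonneg _) (hN u) 2
  have hF : Continuous fun u ↦ ∫ z in s..u, f z := intervalIntegral.continuous_primitive hf s
  intro t ht
  have hsub : uIcc s t ⊆ Icc s T := by rw [uIcc_of_le ht.1]; exact Icc_subset_Icc_right ht.2
  have hsol := eq_exp_integral_mul_integral_of_eq_integral (a := fun u ↦ 2 * f u)
    (b := fun u ↦ c * (σ u ^ 2 * exp (∫ z in s..u, f z))) ((hf s t).const_mul 2)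
    (((hσ2 s t).mul_continuousOn (continuous_exp.comp hF).continuousOn).const_mul c)
    (hv_cont.mono hsub) fun x hx ↦ by
      simpa only [mul_assoc, intervalIntegral.integral_const_mul] using heq x (hsub hx)
  rw [hsol, ← intervalIntegral.integral_const_mul, ← intervalIntegral.integral_const_mul]
  refine intervalIntegral.integral_congr fun u _ ↦ ?_
  simp only [intervalIntegral.integral_const_mul,
    ← intervalIntegral.integral_interval_sub_left (hf s t) (hf s u)]
  generalize (∫ z in s..t, f z) = Ft
  generalize (∫ z in s..u, f z) = Fu
  rw [show Fu + 2 * (Ft - Fu) = 2 * Ft + Fu + -(2 * Fu) by ring, exp_add, exp_add]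
  ring

/-- the linear non-homogeneous integral equation for the conditional
variance: if `v(t) = 2∫_s^t f(u) v(u) du + c ∫_s^t σ(u)² exp(∫_s^u f(z) dz) du`
with `f, σ` bounded measurable, `σ ≥ 0`, `v` continuous and `c ≥ 0`, then
`v(t) = c ∫_s^t σ(u)² exp(∫_s^u f(z) dz + 2∫_u^t f(z) dz) du`. -/
theorem variance_integral_equation_solution
    (s T c : ℝ) (hc : 0 ≤ c) (f σ v : ℝ → ℝ)
    (hf_meas : Measurable f) (hf_bdd : ∃ M, ∀ u, |f u| ≤ M)
    (hσ_meas : Measurable σ) (hσ_bdd : ∃ M, ∀ u, |σ u| ≤ M)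
    (hσ_nonneg : ∀ u ∈ Set.Icc s T, 0 ≤ σ u)
    (hv_cont : ContinuousOn v (Set.Icc s T))
    (heq : ∀ t ∈ Set.Icc s T,
      v t = 2 * (∫ u in s..t, f u * v u) +
        c * ∫ u in s..t, (σ u) ^ 2 * Real.exp (∫ z in s..u, f z)) :
    ∀ t ∈ Set.Icc s T,
      v t = c * ∫ u in s..t,
        (σ u) ^ 2 * Real.exp ((∫ z in s..u, f z) + 2 * ∫ z in u..t, f z) :=
  variance_integral_equation_solution_general s T c f σ v hf_meas hf_bdd hσ_meas hσ_bdd hv_cont heq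
end
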